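/- arXiv:2205.13887 — 7 statements merged into one kernel-verified Lean document; each statement's English description precedes it below -/
import Mathlib

section
/- The pair of quaternion matrix equations A X = E₁ and X B = E₂ has a common solution X if and only if R_A E₁ = 0, E₂ L_B = 0, and A E₂ = E₁ B; in that case X = A† E₁ + L_A E₂ B† + L_A U R_B is a solution for every U of compatible size. -/
open scoped Quaternion Matrix

/-- The pair `A X = E₁`, `X B = E₂` has a common solution iff `R_A E₁ = 0`,
`E₂ L_B = 0` and `A E₂ = E₁ B`; in that case `X = A†E₁ + L_A E₂ B† + L_A U R_B`
is a solution for every `U`. -/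
theorem stmt_7 {p n m q : ℕ} (A : Matrix (Fin p) (Fin n) ℍ[ℝ])
    (Ad : Matrix (Fin n) (Fin p) ℍ[ℝ]) (B : Matrix (Fin m) (Fin q) ℍ[ℝ])
    (Bd : Matrix (Fin q) (Fin m) ℍ[ℝ])
    (E₁ : Matrix (Fin p) (Fin m) ℍ[ℝ]) (E₂ : Matrix (Fin n) (Fin q) ℍ[ℝ])
    (hA1 : A * Ad * A = A) (hA2 : Ad * A * Ad = Ad)
    (hA3 : (A * Ad)ᴴ = A * Ad) (hA4 : (Ad * A)ᴴ = Ad * A)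
    (hB1 : B * Bd * B = B) (hB2 : Bd * B * Bd = Bd)
    (hB3 : (B * Bd)ᴴ = B * Bd) (hB4 : (Bd * B)ᴴ = Bd * B) :
    ((∃ X : Matrix (Fin n) (Fin m) ℍ[ℝ], A * X = E₁ ∧ X * B = E₂) ↔
      ((1 - A * Ad) * E₁ = 0 ∧ E₂ * (1 - Bd * B) = 0 ∧ A * E₂ = E₁ * B)) ∧
    (∀ U : Matrix (Fin n) (Fin m) ℍ[ℝ],
      (1 - A * Ad) * E₁ = 0 → E₂ * (1 - Bd * B) = 0 → A * E₂ = E₁ * B →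
      A * (Ad * E₁ + (1 - Ad * A) * E₂ * Bd + (1 - Ad * A) * U * (1 - B * Bd)) = E₁ ∧
      (Ad * E₁ + (1 - Ad * A) * E₂ * Bd + (1 - Ad * A) * U * (1 - B * Bd)) * B = E₂) := by
  have key : ∀ U : Matrix (Fin n) (Fin m) ℍ[ℝ],
      (1 - A * Ad) * E₁ = 0 → E₂ * (1 - Bd * B) = 0 → A * E₂ = E₁ * B →
      A * (Ad * E₁ + (1 - Ad * A) * E₂ * Bd + (1 - Ad * A) * U * (1 - B * Bd)) = E₁ ∧
      (Ad * E₁ + (1 - Ad * A) * E₂ * Bd + (1 - Ad * A) * U * (1 - B * Bd)) * B = E₂ := by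
    intro U h1 h2 h3
    have hE1 : A * Ad * E₁ = E₁ := by
      have := h1
      rw [Matrix.sub_mul, Matrix.one_mul, sub_eq_zero] at this
      exact this.symm
    have hE2 : E₂ * (Bd * B) = E₂ := by
      have := h2
      rw [Matrix.mul_sub, Matrix.mul_one, sub_eq_zero] at this
      exact this.symm
    have hzA : A * (1 - Ad * A) = 0 := by
      rw [Matrix.mul_sub, Matrix.mul_one, ← Matrix.mul_assoc, hA1, sub_self]
    have hzB : (1 - B * Bd) * B = 0 := by
      rw [Matrix.sub_mul, Matrix.one_mul, hB1, sub_self]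
    constructor
    · simp only [Matrix.mul_add, ← Matrix.mul_assoc, hzA, hE1, Matrix.zero_mul,
        add_zero]
    · simp only [Matrix.add_mul, Matrix.mul_assoc, hzB, hE2, ← h3, Matrix.mul_zero,
        add_zero]
      rw [Matrix.sub_mul, Matrix.one_mul, Matrix.mul_assoc, ← Matrix.mul_assoc Ad A E₂]
      abel
  refine ⟨⟨?_, fun ⟨h1, h2, h3⟩ => ⟨_, key 0 h1 h2 h3⟩⟩, key⟩
  rintro ⟨X, h1, h2⟩
  refine ⟨?_, ?_, ?_⟩
  · rw [← h1, Matrix.sub_mul, Matrix.one_mul, ← Matrix.mul_assoc, hA1, sub_self]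
  · rw [← h2, Matrix.mul_sub, Matrix.mul_one, Matrix.mul_assoc, ← Matrix.mul_assoc B Bd B,
      hB1, sub_self]
  · rw [← h1, ← h2, ← Matrix.mul_assoc]
end

section
/- Let A, C be m×n and m×g quaternion matrices, B, D be k×l and h×l quaternion matrices, and E an m×l quaternion matrix. Set P = R_A C, Q = D L_B, S = C L_P. If the equation A X B + C Y D = E has a solution (X, Y), then R_P R_A E = 0, E L_B L_Q = 0, R_A E L_D = 0, and R_C E L_B = 0. -/
open scoped Quaternion Matrix

/-- Necessary conditions for solvability of `A X B + C Y D = E`. -/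
theorem stmt_9 {m n g k l h : ℕ}
    (A : Matrix (Fin m) (Fin n) ℍ[ℝ]) (Ad : Matrix (Fin n) (Fin m) ℍ[ℝ])
    (B : Matrix (Fin k) (Fin l) ℍ[ℝ]) (Bd : Matrix (Fin l) (Fin k) ℍ[ℝ])
    (C : Matrix (Fin m) (Fin g) ℍ[ℝ]) (Cd : Matrix (Fin g) (Fin m) ℍ[ℝ])
    (D : Matrix (Fin h) (Fin l) ℍ[ℝ]) (Dd : Matrix (Fin l) (Fin h) ℍ[ℝ])
    (E : Matrix (Fin m) (Fin l) ℍ[ℝ])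
    (P : Matrix (Fin m) (Fin g) ℍ[ℝ]) (Pd : Matrix (Fin g) (Fin m) ℍ[ℝ])
    (Q : Matrix (Fin h) (Fin l) ℍ[ℝ]) (Qd : Matrix (Fin l) (Fin h) ℍ[ℝ])
    (hP : P = (1 - A * Ad) * C) (hQ : Q = D * (1 - Bd * B))
    (hA1 : A * Ad * A = A) (hA2 : Ad * A * Ad = Ad)
    (hA3 : (A * Ad)ᴴ = A * Ad) (hA4 : (Ad * A)ᴴ = Ad * A)
    (hB1 : B * Bd * B = B) (hB2 : Bd * B * Bd = Bd)
    (hB3 : (B * Bd)ᴴ = B * Bd) (hB4 : (Bd * B)ᴴ = Bd * B)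
    (hC1 : C * Cd * C = C) (hC2 : Cd * C * Cd = Cd)
    (hC3 : (C * Cd)ᴴ = C * Cd) (hC4 : (Cd * C)ᴴ = Cd * C)
    (hD1 : D * Dd * D = D) (hD2 : Dd * D * Dd = Dd)
    (hD3 : (D * Dd)ᴴ = D * Dd) (hD4 : (Dd * D)ᴴ = Dd * D)
    (hP1 : P * Pd * P = P) (hP2 : Pd * P * Pd = Pd)
    (hP3 : (P * Pd)ᴴ = P * Pd) (hP4 : (Pd * P)ᴴ = Pd * P)
    (hQ1 : Q * Qd * Q = Q) (hQ2 : Qd * Q * Qd = Qd)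
    (hQ3 : (Q * Qd)ᴴ = Q * Qd) (hQ4 : (Qd * Q)ᴴ = Qd * Q)
    (hsol : ∃ (X : Matrix (Fin n) (Fin k) ℍ[ℝ]) (Y : Matrix (Fin g) (Fin h) ℍ[ℝ]),
      A * X * B + C * Y * D = E) :
    (1 - P * Pd) * ((1 - A * Ad) * E) = 0 ∧
    E * (1 - Bd * B) * (1 - Qd * Q) = 0 ∧
    (1 - A * Ad) * E * (1 - Dd * D) = 0 ∧
    (1 - C * Cd) * E * (1 - Bd * B) = 0 := by
  obtain ⟨X, Y, heq⟩ := hsol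
  subst heq
  have zA : (1 - A * Ad) * A = 0 := by rw [Matrix.sub_mul, Matrix.one_mul, hA1, sub_self]
  have zC : (1 - C * Cd) * C = 0 := by rw [Matrix.sub_mul, Matrix.one_mul, hC1, sub_self]
  have zB : B * (1 - Bd * B) = 0 := by
    rw [Matrix.mul_sub, Matrix.mul_one, ← Matrix.mul_assoc, hB1, sub_self]
  have zD : D * (1 - Dd * D) = 0 := by
    rw [Matrix.mul_sub, Matrix.mul_one, ← Matrix.mul_assoc, hD1, sub_self]
  have zP : (1 - P * Pd) * P = 0 := by rw [Matrix.sub_mul, Matrix.one_mul, hP1, sub_self]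
  have zQ : Q * (1 - Qd * Q) = 0 := by
    rw [Matrix.mul_sub, Matrix.mul_one, ← Matrix.mul_assoc, hQ1, sub_self]
  have h1 : (1 - A * Ad) * (A * X * B + C * Y * D) = P * (Y * D) := by
    rw [Matrix.mul_add, Matrix.mul_assoc A X B, ← Matrix.mul_assoc (1 - A * Ad) A, zA, Matrix.zero_mul,
        zero_add, Matrix.mul_assoc C Y D, ← Matrix.mul_assoc (1 - A * Ad) C, ← hP]
  refine ⟨?_, ?_, ?_, ?_⟩
  · rw [h1, ← Matrix.mul_assoc, zP, Matrix.zero_mul]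
  · rw [Matrix.add_mul, Matrix.mul_assoc (A * X) B, zB, Matrix.mul_zero, zero_add,
        Matrix.mul_assoc (C * Y) D, ← hQ, Matrix.mul_assoc (C * Y) Q, zQ, Matrix.mul_zero]
  · rw [h1, Matrix.mul_assoc P, Matrix.mul_assoc Y D, zD, Matrix.mul_zero, Matrix.mul_zero]
  · rw [Matrix.mul_add, Matrix.mul_assoc C Y D, ← Matrix.mul_assoc (1 - C * Cd) C, zC, Matrix.zero_mul,
        add_zero, Matrix.mul_assoc (1 - C * Cd), Matrix.mul_assoc (A * X) B, zB,
        Matrix.mul_zero, Matrix.mul_zero]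
end

section
/- With A, B, C, D, E as above and P = R_A C, Q = D L_B, S = C L_P: if R_P R_A E = 0, E L_B L_Q = 0, R_A E L_D = 0 and R_C E L_B = 0 all hold, then X = A†EB† − A†CP†EB† − A†SC†EQ†DB† and Y = P†ED† + S†SC†EQ† satisfy A X B + C Y D = E. -/
open scoped Quaternion Matrix

set_option maxHeartbeats 1600000 in
/-- Under the four solvability conditions, the stated pair `(X, Y)` solves
`A X B + C Y D = E` (zero-parameter instance of the general solution). -/
theorem stmt_10 {m n g k l h : ℕ}
    (A : Matrix (Fin m) (Fin n) ℍ[ℝ]) (Ad : Matrix (Fin n) (Fin m) ℍ[ℝ])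
    (B : Matrix (Fin k) (Fin l) ℍ[ℝ]) (Bd : Matrix (Fin l) (Fin k) ℍ[ℝ])
    (C : Matrix (Fin m) (Fin g) ℍ[ℝ]) (Cd : Matrix (Fin g) (Fin m) ℍ[ℝ])
    (D : Matrix (Fin h) (Fin l) ℍ[ℝ]) (Dd : Matrix (Fin l) (Fin h) ℍ[ℝ])
    (E : Matrix (Fin m) (Fin l) ℍ[ℝ])
    (P : Matrix (Fin m) (Fin g) ℍ[ℝ]) (Pd : Matrix (Fin g) (Fin m) ℍ[ℝ])
    (Q : Matrix (Fin h) (Fin l) ℍ[ℝ]) (Qd : Matrix (Fin l) (Fin h) ℍ[ℝ])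
    (S : Matrix (Fin m) (Fin g) ℍ[ℝ]) (Sd : Matrix (Fin g) (Fin m) ℍ[ℝ])
    (hP : P = (1 - A * Ad) * C) (hQ : Q = D * (1 - Bd * B))
    (hS : S = C * (1 - Pd * P))
    (hA1 : A * Ad * A = A) (hA2 : Ad * A * Ad = Ad)
    (hA3 : (A * Ad)ᴴ = A * Ad) (hA4 : (Ad * A)ᴴ = Ad * A)
    (hB1 : B * Bd * B = B) (hB2 : Bd * B * Bd = Bd)
    (hB3 : (B * Bd)ᴴ = B * Bd) (hB4 : (Bd * B)ᴴ = Bd * B)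
    (hC1 : C * Cd * C = C) (hC2 : Cd * C * Cd = Cd)
    (hC3 : (C * Cd)ᴴ = C * Cd) (hC4 : (Cd * C)ᴴ = Cd * C)
    (hD1 : D * Dd * D = D) (hD2 : Dd * D * Dd = Dd)
    (hD3 : (D * Dd)ᴴ = D * Dd) (hD4 : (Dd * D)ᴴ = Dd * D)
    (hP1 : P * Pd * P = P) (hP2 : Pd * P * Pd = Pd)
    (hP3 : (P * Pd)ᴴ = P * Pd) (hP4 : (Pd * P)ᴴ = Pd * P)
    (hQ1 : Q * Qd * Q = Q) (hQ2 : Qd * Q * Qd = Qd)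
    (hQ3 : (Q * Qd)ᴴ = Q * Qd) (hQ4 : (Qd * Q)ᴴ = Qd * Q)
    (hS1 : S * Sd * S = S) (hS2 : Sd * S * Sd = Sd)
    (hS3 : (S * Sd)ᴴ = S * Sd) (hS4 : (Sd * S)ᴴ = Sd * S)
    (hc1 : (1 - P * Pd) * ((1 - A * Ad) * E) = 0)
    (hc2 : E * (1 - Bd * B) * (1 - Qd * Q) = 0)
    (hc3 : (1 - A * Ad) * E * (1 - Dd * D) = 0)
    (hc4 : (1 - C * Cd) * E * (1 - Bd * B) = 0) :
    A * (Ad * E * Bd - Ad * C * Pd * E * Bd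
        - Ad * S * Cd * E * Qd * D * Bd) * B
      + C * (Pd * E * Dd + Sd * S * Cd * E * Qd) * D = E := by
  -- reshaped defining equations
  have hP' : P = C - A * Ad * C := by rw [hP, Matrix.sub_mul, Matrix.one_mul]
  have hQ' : Q = D - D * (Bd * B) := by rw [hQ, Matrix.mul_sub, Matrix.mul_one]
  have hS' : S = C - C * (Pd * P) := by rw [hS, Matrix.mul_sub, Matrix.mul_one]
  have hAAC : A * Ad * C = C - P := by rw [hP', sub_sub_cancel]
  have hDBB : D * (Bd * B) = D - Q := by rw [hQ', sub_sub_cancel]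
  have hAAP : A * Ad * P = 0 := by
    rw [hP', Matrix.mul_sub,
      show A*Ad*(A*Ad*C) = A*Ad*C by
        rw [← Matrix.mul_assoc, ← Matrix.mul_assoc, hA1],
      sub_self]
  have hPHA : Pᴴ * (A * Ad) = 0 := by
    have h := congrArg Matrix.conjTranspose hAAP
    rwa [Matrix.conjTranspose_mul, hA3, Matrix.conjTranspose_zero] at h
  have hPdAA : Pd * (A * Ad) = 0 := by
    have h0 : Pd * (A*Ad) = Pd * (P*Pd) * (A*Ad) := by
      rw [← Matrix.mul_assoc Pd P Pd, hP2]
    rw [h0, ← hP3, Matrix.conjTranspose_mul, Matrix.mul_assoc, Matrix.mul_assoc, hPHA,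
      Matrix.mul_zero, Matrix.mul_zero]
  have hPdC : Pd * C = Pd * P := by
    rw [hP', Matrix.mul_sub, ← Matrix.mul_assoc, hPdAA, Matrix.zero_mul, sub_zero]
  -- B/Q facts
  have hBB : Bd * B * (Bd * B) = Bd * B := by rw [← Matrix.mul_assoc, hB2]
  have hQb : Q * (Bd * B) = 0 := by
    rw [hQ', Matrix.sub_mul, Matrix.mul_assoc D (Bd*B) (Bd*B), hBB, sub_self]
  have hQQb : Qd * Q * (Bd * B) = 0 := by
    rw [Matrix.mul_assoc, hQb, Matrix.mul_zero]
  have hbQQ : Bd * B * (Qd * Q) = 0 := by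
    have h := congrArg Matrix.conjTranspose hQQb
    rwa [Matrix.conjTranspose_mul, hB4, hQ4, Matrix.conjTranspose_zero] at h
  -- L_P facts
  have hPP : Pd * P * (Pd * P) = Pd * P := by rw [← Matrix.mul_assoc, hP2]
  have hSPP : S * (Pd * P) = 0 := by
    rw [hS', Matrix.sub_mul, Matrix.mul_assoc C (Pd*P) (Pd*P), hPP, sub_self]
  have hSSPP : Sd * S * (Pd * P) = 0 := by
    rw [Matrix.mul_assoc, hSPP, Matrix.mul_zero]
  have hPPSS : Pd * P * (Sd * S) = 0 := by
    have h := congrArg Matrix.conjTranspose hSSPP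
    rwa [Matrix.conjTranspose_mul, hS4, hP4, Matrix.conjTranspose_zero] at h
  have hC'' : C = S + C * (Pd * P) := by rw [hS', sub_add_cancel]
  have hCSS : C * (Sd * S) = S := by
    calc C * (Sd * S) = (S + C * (Pd * P)) * (Sd * S) := by rw [← hC'']
      _ = S * (Sd * S) + C * (Pd * P * (Sd * S)) := by
          rw [Matrix.add_mul, Matrix.mul_assoc C (Pd*P) (Sd*S)]
      _ = S := by rw [hPPSS, Matrix.mul_zero, add_zero, ← Matrix.mul_assoc, hS1]
  have hP1' : P * (Pd * P) = P := by rw [← Matrix.mul_assoc, hP1]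
  have hAAS : A * Ad * S = S := by
    rw [hS', Matrix.mul_sub, ← Matrix.mul_assoc (A*Ad) C (Pd*P), hAAC,
      Matrix.sub_mul, hP1']
    abel
  -- condition 1 : key1
  have key1 : A * Ad * E + P * Pd * E = E := by
    simp only [Matrix.sub_mul, Matrix.mul_sub, Matrix.one_mul, Matrix.mul_one] at hc1
    have hz : P * Pd * (A * Ad * E) = 0 := by
      rw [Matrix.mul_assoc P Pd (A*Ad*E), ← Matrix.mul_assoc Pd (A*Ad) E, hPdAA,
        Matrix.zero_mul, Matrix.mul_zero]
    rw [hz, sub_zero, sub_sub, sub_eq_zero] at hc1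
    exact (add_comm _ _).trans hc1.symm
  -- condition 3 : key2
  have key2 : Pd * (E * (Dd * D)) = Pd * E := by
    simp only [Matrix.sub_mul, Matrix.mul_sub, Matrix.one_mul, Matrix.mul_one] at hc3
    have h := congrArg (fun Z => Pd * Z) hc3
    simp only [Matrix.mul_sub, Matrix.mul_zero] at h
    rw [← Matrix.mul_assoc Pd (A*Ad) E, hPdAA, Matrix.zero_mul] at h
    rw [show Pd * (A * Ad * E * (Dd * D)) = 0 by
      rw [Matrix.mul_assoc (A*Ad) E (Dd*D), ← Matrix.mul_assoc Pd (A*Ad) (E*(Dd*D)),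
        hPdAA, Matrix.zero_mul]] at h
    rw [sub_zero, sub_zero, sub_eq_zero] at h
    exact h.symm
  -- condition 2 : e6a
  have e6a : E * (Qd * Q) = E - E * (Bd * B) := by
    simp only [Matrix.sub_mul, Matrix.mul_sub, Matrix.one_mul, Matrix.mul_one] at hc2
    rw [Matrix.mul_assoc E (Bd*B) (Qd*Q), hbQQ, Matrix.mul_zero, sub_zero] at hc2
    exact (sub_eq_zero.mp hc2).symm
  -- condition 4 : f1
  have f1 : C * (Cd * (E - E * (Bd * B))) = E - E * (Bd * B) := by
    simp only [Matrix.sub_mul, Matrix.mul_sub, Matrix.one_mul, Matrix.mul_one] at hc4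
    rw [Matrix.mul_sub, Matrix.mul_sub, ← Matrix.mul_assoc C Cd E,
      ← Matrix.mul_assoc C Cd (E*(Bd*B)), ← Matrix.mul_assoc (C*Cd) E (Bd*B)]
    rw [← sub_eq_zero,
      show C*Cd*E - C*Cd*E*(Bd*B) - (E - E*(Bd*B))
          = -(E - C*Cd*E - (E*(Bd*B) - C*Cd*E*(Bd*B))) from by abel,
      hc4, neg_zero]
  -- applied forms for final assembly
  have e1 : A * (Ad * (E * (Bd * B))) = E * (Bd * B) - P * (Pd * (E * (Bd * B))) := by
    have h := congrArg (fun Z => Z * (Bd * B)) key1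
    simp only [Matrix.add_mul, Matrix.mul_assoc] at h
    exact eq_sub_of_add_eq h
  have e2 : A * (Ad * (C * (Pd * (E * (Bd * B)))))
      = C * (Pd * (E * (Bd * B))) - P * (Pd * (E * (Bd * B))) := by
    have h := congrArg (fun Z => Z * (Pd * (E * (Bd * B)))) hAAC
    simp only [Matrix.sub_mul, Matrix.mul_assoc] at h
    exact h
  have e3 : A * (Ad * (S * (Cd * (E * (Qd * (D * (Bd * B)))))))
      = S * (Cd * (E * (Qd * D))) - S * (Cd * (E * (Qd * Q))) := by
    have h := congrArg (fun Z => Z * (Cd * (E * (Qd * (D * (Bd * B)))))) hAAS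
    simp only [Matrix.mul_assoc] at h
    rw [h, hDBB]
    simp only [Matrix.mul_sub]
  have e4 : C * (Pd * (E * (Dd * D))) = C * (Pd * E) := by rw [key2]
  have e5 : C * (Sd * (S * (Cd * (E * (Qd * D))))) = S * (Cd * (E * (Qd * D))) := by
    have h := congrArg (fun Z => Z * (Cd * (E * (Qd * D)))) hCSS
    simp only [Matrix.mul_assoc] at h
    exact h
  have f2 : Pd * (E - E * (Bd * B)) = Pd * (P * (Cd * (E - E * (Bd * B)))) := by
    conv_lhs => rw [← f1]
    rw [← Matrix.mul_assoc, hPdC, Matrix.mul_assoc]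
  have e6 : S * (Cd * (E * (Qd * Q)))
      = (E - E * (Bd * B)) - (C * (Pd * E) - C * (Pd * (E * (Bd * B)))) := by
    rw [e6a]
    have h := congrArg (fun Z => Z * (Cd * (E - E * (Bd * B)))) hS'
    simp only [Matrix.sub_mul, Matrix.mul_assoc] at h
    rw [h, f1, ← f2, Matrix.mul_sub, Matrix.mul_sub]
  -- final assembly
  simp only [Matrix.sub_mul, Matrix.mul_sub, Matrix.add_mul, Matrix.mul_add,
    Matrix.mul_assoc]
  rw [e1, e2, e3, e4, e5, e6]
  abel
end

section
/- Suppose (X, Y) is a particular solution of A X B + C Y D = E over the quaternions. Then for arbitrary matrices U₁,...,U₅ of compatible sizes, the pair X' = X − A†S U₂ R_Q D B† + L_A U₄ + U₅ R_B and Y' = Y + L_P L_S U₁ + L_P U₂ R_Q + U₃ R_D, where P = R_A C, Q = D L_B, S = C L_P, is again a solution of A X' B + C Y' D = E. -/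
open scoped Quaternion Matrix

/-- Purely additive/distributive rearrangement of the solution expression. -/
theorem stmt_11_aux {m n g k l h : ℕ}
    (A : Matrix (Fin m) (Fin n) ℍ[ℝ]) (B : Matrix (Fin k) (Fin l) ℍ[ℝ])
    (C : Matrix (Fin m) (Fin g) ℍ[ℝ]) (D : Matrix (Fin h) (Fin l) ℍ[ℝ])
    (X T2 T3 : Matrix (Fin n) (Fin k) ℍ[ℝ]) (T1 : Matrix (Fin n) (Fin k) ℍ[ℝ])
    (Y W1 W2 W3 : Matrix (Fin g) (Fin h) ℍ[ℝ]) :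
    A * (X - T1 + T2 + T3) * B + C * (Y + W1 + W2 + W3) * D
      = (A * X * B + C * Y * D) + (C * W2 * D - A * T1 * B)
        + A * T2 * B + A * T3 * B + C * W1 * D + C * W3 * D := by
  simp only [Matrix.mul_add, Matrix.mul_sub, Matrix.add_mul, Matrix.sub_mul]
  abel

/-- Translating a particular solution of `A X B + C Y D = E` by the homogeneous
terms again yields a solution. -/
theorem stmt_11 {m n g k l h : ℕ}
    (A : Matrix (Fin m) (Fin n) ℍ[ℝ]) (Ad : Matrix (Fin n) (Fin m) ℍ[ℝ])
    (B : Matrix (Fin k) (Fin l) ℍ[ℝ]) (Bd : Matrix (Fin l) (Fin k) ℍ[ℝ])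
    (C : Matrix (Fin m) (Fin g) ℍ[ℝ])
    (D : Matrix (Fin h) (Fin l) ℍ[ℝ]) (Dd : Matrix (Fin l) (Fin h) ℍ[ℝ])
    (E : Matrix (Fin m) (Fin l) ℍ[ℝ])
    (P : Matrix (Fin m) (Fin g) ℍ[ℝ]) (Pd : Matrix (Fin g) (Fin m) ℍ[ℝ])
    (Q : Matrix (Fin h) (Fin l) ℍ[ℝ]) (Qd : Matrix (Fin l) (Fin h) ℍ[ℝ])
    (S : Matrix (Fin m) (Fin g) ℍ[ℝ]) (Sd : Matrix (Fin g) (Fin m) ℍ[ℝ])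
    (hP : P = (1 - A * Ad) * C) (hQ : Q = D * (1 - Bd * B))
    (hS : S = C * (1 - Pd * P))
    (hA1 : A * Ad * A = A) (hA2 : Ad * A * Ad = Ad)
    (hA3 : (A * Ad)ᴴ = A * Ad) (hA4 : (Ad * A)ᴴ = Ad * A)
    (hB1 : B * Bd * B = B) (hB2 : Bd * B * Bd = Bd)
    (hB3 : (B * Bd)ᴴ = B * Bd) (hB4 : (Bd * B)ᴴ = Bd * B)
    (hD1 : D * Dd * D = D) (hD2 : Dd * D * Dd = Dd)
    (hD3 : (D * Dd)ᴴ = D * Dd) (hD4 : (Dd * D)ᴴ = Dd * D)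
    (hP1 : P * Pd * P = P) (hP2 : Pd * P * Pd = Pd)
    (hP3 : (P * Pd)ᴴ = P * Pd) (hP4 : (Pd * P)ᴴ = Pd * P)
    (hQ1 : Q * Qd * Q = Q) (hQ2 : Qd * Q * Qd = Qd)
    (hQ3 : (Q * Qd)ᴴ = Q * Qd) (hQ4 : (Qd * Q)ᴴ = Qd * Q)
    (hS1 : S * Sd * S = S) (hS2 : Sd * S * Sd = Sd)
    (hS3 : (S * Sd)ᴴ = S * Sd) (hS4 : (Sd * S)ᴴ = Sd * S)
    (X : Matrix (Fin n) (Fin k) ℍ[ℝ]) (Y : Matrix (Fin g) (Fin h) ℍ[ℝ])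
    (hXY : A * X * B + C * Y * D = E)
    (U₁ U₂ : Matrix (Fin g) (Fin h) ℍ[ℝ]) (U₃ : Matrix (Fin g) (Fin h) ℍ[ℝ])
    (U₄ U₅ : Matrix (Fin n) (Fin k) ℍ[ℝ]) :
    A * (X - Ad * S * U₂ * (1 - Q * Qd) * D * Bd
          + (1 - Ad * A) * U₄ + U₅ * (1 - B * Bd)) * B
      + C * (Y + (1 - Pd * P) * (1 - Sd * S) * U₁
          + (1 - Pd * P) * U₂ * (1 - Q * Qd) + U₃ * (1 - D * Dd)) * D = E := by
  have hCLP : C * (1 - Pd * P) = S := hS.symm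
  -- A * L_A = 0
  have hALA : A * (1 - Ad * A) = 0 := by
    rw [Matrix.mul_sub, Matrix.mul_one, ← Matrix.mul_assoc, hA1, sub_self]
  -- R_B * B = 0
  have hRBB : (1 - B * Bd) * B = 0 := by
    rw [Matrix.sub_mul, Matrix.one_mul, hB1, sub_self]
  -- R_D * D = 0
  have hRDD : (1 - D * Dd) * D = 0 := by
    rw [Matrix.sub_mul, Matrix.one_mul, hD1, sub_self]
  -- S * L_S = 0
  have hSLS : S * (1 - Sd * S) = 0 := by
    rw [Matrix.mul_sub, Matrix.mul_one, ← Matrix.mul_assoc, hS1, sub_self]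
  -- A * Ad * S = S
  have hAAdS : A * Ad * S = S := by
    have h0 : (1 - A * Ad) * S = 0 := by
      rw [hS, ← Matrix.mul_assoc, ← hP, Matrix.mul_sub, Matrix.mul_one,
        ← Matrix.mul_assoc, hP1, sub_self]
    have h1 : S - A * Ad * S = 0 := by
      rw [Matrix.sub_mul, Matrix.one_mul] at h0; exact h0
    have := sub_eq_zero.mp h1
    exact this.symm
  -- R_Q * D * Bd * B = R_Q * D
  have hkey : (1 - Q * Qd) * D * Bd * B = (1 - Q * Qd) * D := by
    have h0 : (1 - Q * Qd) * Q = 0 := by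
      rw [Matrix.sub_mul, Matrix.one_mul, hQ1, sub_self]
    have h1 : (1 - Q * Qd) * D - (1 - Q * Qd) * D * Bd * B = 0 := by
      calc (1 - Q * Qd) * D - (1 - Q * Qd) * D * Bd * B
          = (1 - Q * Qd) * (D * (1 - Bd * B)) := by
            rw [Matrix.mul_sub, Matrix.mul_one, Matrix.mul_sub, ← Matrix.mul_assoc,
              Matrix.mul_assoc ((1 - Q * Qd) * D)]
        _ = 0 := by rw [← hQ]; exact h0
    exact (sub_eq_zero.mp h1).symm
  -- the four vanishing pieces
  have E2 : A * ((1 - Ad * A) * U₄) * B = 0 := by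
    rw [← Matrix.mul_assoc, hALA, Matrix.zero_mul, Matrix.zero_mul]
  have E3 : A * (U₅ * (1 - B * Bd)) * B = 0 := by
    rw [Matrix.mul_assoc A, Matrix.mul_assoc U₅, hRBB, Matrix.mul_zero, Matrix.mul_zero]
  have E6 : C * (U₃ * (1 - D * Dd)) * D = 0 := by
    rw [Matrix.mul_assoc C, Matrix.mul_assoc U₃, hRDD, Matrix.mul_zero, Matrix.mul_zero]
  have E4 : C * ((1 - Pd * P) * (1 - Sd * S) * U₁) * D = 0 := by
    rw [← Matrix.mul_assoc, ← Matrix.mul_assoc, hCLP, hSLS,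
      Matrix.zero_mul, Matrix.zero_mul]
  -- the matched pair
  have E5 : C * ((1 - Pd * P) * U₂ * (1 - Q * Qd)) * D
      = A * (Ad * S * U₂ * (1 - Q * Qd) * D * Bd) * B := by
    have hL : C * ((1 - Pd * P) * U₂ * (1 - Q * Qd)) * D
        = S * U₂ * ((1 - Q * Qd) * D) := by
      rw [← Matrix.mul_assoc, ← Matrix.mul_assoc, hCLP, Matrix.mul_assoc (S * U₂)]
    have hR : A * (Ad * S * U₂ * (1 - Q * Qd) * D * Bd) * B
        = S * U₂ * ((1 - Q * Qd) * D) := by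
      calc A * (Ad * S * U₂ * (1 - Q * Qd) * D * Bd) * B
          = A * Ad * S * U₂ * (1 - Q * Qd) * D * Bd * B := by
            simp only [Matrix.mul_assoc]
        _ = S * (U₂ * ((1 - Q * Qd) * D * Bd * B)) := by
            rw [hAAdS]; simp only [Matrix.mul_assoc]
        _ = S * U₂ * ((1 - Q * Qd) * D) := by
            rw [hkey]; rw [Matrix.mul_assoc]
    rw [hL, hR]
  rw [stmt_11_aux, hXY, E5, E2, E3, E4, E6]
  simp
end

section
/- Let A₁, A₂ be m×n and m×g quaternion matrices, B₁, B₂ be k×l and h×l quaternion matrices. The equation A₁X₁B₁ + A₂X₂B₂ + A₂(C₃X₃D₃ + C₄WD₄)B₁ = E₁ has a solution (X₁,X₂,X₃,W) if and only if R_{M₁}R_{A₁}E₁ = 0, E₁L_{B₁}L_{N₁} = 0, R_{A₂}E₁L_{B₁} = 0, and the equation Â₁X₃B̂₁ + Â₂WB̂₂ = Ê₁ is solvable, where M₁ = R_{A₁}A₂, N₁ = B₂L_{B₁}, Â₁ = M₁C₃, Â₂ = M₁C₄, B̂₁ = D₃B₁L_{B₂}, B̂₂ = D₄B₁L_{B₂},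 Ê₁ = R_{A₁}E₁L_{B₂}. -/
open scoped Quaternion Matrix
open Matrix

set_option maxHeartbeats 1600000 in
lemma bk {m n g k l hh : ℕ}
    (A : Matrix (Fin m) (Fin n) ℍ[ℝ]) (Ad : Matrix (Fin n) (Fin m) ℍ[ℝ])
    (B : Matrix (Fin k) (Fin l) ℍ[ℝ]) (Bd : Matrix (Fin l) (Fin k) ℍ[ℝ])
    (C : Matrix (Fin m) (Fin g) ℍ[ℝ]) (Cd : Matrix (Fin g) (Fin m) ℍ[ℝ])
    (D : Matrix (Fin hh) (Fin l) ℍ[ℝ]) (Dd : Matrix (Fin l) (Fin hh) ℍ[ℝ])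
    (M : Matrix (Fin m) (Fin g) ℍ[ℝ]) (Md : Matrix (Fin g) (Fin m) ℍ[ℝ])
    (N : Matrix (Fin hh) (Fin l) ℍ[ℝ]) (Nd : Matrix (Fin l) (Fin hh) ℍ[ℝ])
    (F : Matrix (Fin m) (Fin l) ℍ[ℝ])
    (hM : M = (1 - A * Ad) * C) (hN : N = D * (1 - Bd * B))
    (hA1 : A * Ad * A = A) (hA3 : (A * Ad)ᴴ = A * Ad)
    (hM1 : M * Md * M = M) (hM2 : Md * M * Md = Md) (hM3 : (M * Md)ᴴ = M * Md)
    (ha : (1 - M * Md) * ((1 - A * Ad) * F) = 0)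
    (hb : F * (1 - Bd * B) * (1 - Nd * N) = 0)
    (hc : (1 - C * Cd) * F * (1 - Bd * B) = 0)
    (hd : (1 - A * Ad) * F * (1 - Dd * D) = 0) :
    ∃ (X : Matrix (Fin n) (Fin k) ℍ[ℝ]) (Y : Matrix (Fin g) (Fin hh) ℍ[ℝ]),
      A * X * B + C * Y * D = F := by
  have hRA2 : (1 - A * Ad) * (1 - A * Ad) = 1 - A * Ad := by
    have h : A * Ad * (A * Ad) = A * Ad := by rw [← Matrix.mul_assoc, hA1]
    rw [Matrix.mul_sub, Matrix.mul_one, Matrix.sub_mul, Matrix.one_mul, h, sub_self, sub_zero]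
  have hRAM : (1 - A * Ad) * M = M := by rw [hM, ← Matrix.mul_assoc, hRA2]
  have hMMdRA : M * Md * (1 - A * Ad) = M * Md := by
    have h2 : (1 - A * Ad) * (M * Md) = M * Md := by rw [← Matrix.mul_assoc, hRAM]
    have h3 := congrArg Matrix.conjTranspose h2
    rw [Matrix.conjTranspose_mul, hM3, Matrix.conjTranspose_sub, Matrix.conjTranspose_one,
      hA3] at h3
    exact h3
  have hMdRA : Md * (1 - A * Ad) = Md := by
    calc Md * (1 - A * Ad) = Md * M * Md * (1 - A * Ad) := by rw [hM2]
    _ = Md * (M * Md * (1 - A * Ad)) := by simp only [Matrix.mul_assoc]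
    _ = Md * (M * Md) := by rw [hMMdRA]
    _ = Md := by rw [← Matrix.mul_assoc, hM2]
  have f7 : ∀ {z : ℕ} (T : Matrix (Fin m) (Fin z) ℍ[ℝ]),
      Md * ((1 - A * Ad) * T) = Md * T := by
    intro z T; rw [← Matrix.mul_assoc, hMdRA]
  have f3 : M * Md * F = (1 - A * Ad) * F := by
    have h := ha
    rw [Matrix.sub_mul, Matrix.one_mul, sub_eq_zero] at h
    calc M * Md * F = M * Md * (1 - A * Ad) * F := by rw [hMMdRA]
    _ = M * Md * ((1 - A * Ad) * F) := by simp only [Matrix.mul_assoc]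
    _ = (1 - A * Ad) * F := h.symm
  have f4 : (1 - A * Ad) * F * (Dd * D) = (1 - A * Ad) * F := by
    have h := hd
    rw [Matrix.mul_sub, Matrix.mul_one, sub_eq_zero] at h
    exact h.symm
  have f5 : F * (1 - Bd * B) * (Nd * N) = F * (1 - Bd * B) := by
    have h := hb
    rw [Matrix.mul_sub, Matrix.mul_one, sub_eq_zero] at h
    exact h.symm
  have f6 : C * (Cd * (F * (1 - Bd * B))) = F * (1 - Bd * B) := by
    have h := hc
    rw [Matrix.sub_mul, Matrix.one_mul, Matrix.sub_mul, sub_eq_zero] at h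
    rw [← Matrix.mul_assoc, ← Matrix.mul_assoc]
    exact h.symm
  have f8 : Md * F * (Dd * D) = Md * F := by
    calc Md * F * (Dd * D) = Md * ((1 - A * Ad) * F) * (Dd * D) := by rw [f7]
    _ = Md * ((1 - A * Ad) * F * (Dd * D)) := by simp only [Matrix.mul_assoc]
    _ = Md * ((1 - A * Ad) * F) := by rw [f4]
    _ = Md * F := f7 F
  have hMLM : M * (1 - Md * M) = 0 := by
    rw [Matrix.mul_sub, Matrix.mul_one, ← Matrix.mul_assoc, hM1, sub_self]
  obtain ⟨FL, hFL⟩ : ∃ FL, FL = F * (1 - Bd * B) := ⟨_, rfl⟩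
  rw [← hFL] at f5 f6
  obtain ⟨Y, hY⟩ : ∃ Y : Matrix (Fin g) (Fin hh) ℍ[ℝ],
      Y = Md * F * Dd + (1 - Md * M) * (Cd * FL * Nd) := ⟨_, rfl⟩
  obtain ⟨G, hG⟩ : ∃ G, G = F - C * Y * D := ⟨_, rfl⟩
  -- Claim A
  have hCYD : (1 - A * Ad) * (C * Y * D) = (1 - A * Ad) * F := by
    calc (1 - A * Ad) * (C * Y * D) = (1 - A * Ad) * C * Y * D := by
          simp only [Matrix.mul_assoc]
    _ = M * Y * D := by rw [← hM]
    _ = (M * (Md * F * Dd) + M * ((1 - Md * M) * (Cd * FL * Nd))) * D := by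
          rw [hY, Matrix.mul_add]
    _ = M * (Md * F * Dd) * D + M * ((1 - Md * M) * (Cd * FL * Nd)) * D := by
          rw [Matrix.add_mul]
    _ = M * Md * F * (Dd * D) + M * (1 - Md * M) * (Cd * FL * Nd) * D := by
          simp only [Matrix.mul_assoc]
    _ = (1 - A * Ad) * F * (Dd * D) + 0 := by
          rw [f3, hMLM, Matrix.zero_mul, Matrix.zero_mul]
    _ = (1 - A * Ad) * F := by rw [f4, add_zero]
  have claimA : (1 - A * Ad) * G = 0 := by
    rw [hG, Matrix.mul_sub, hCYD, sub_self]
  -- Claim B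
  have hMCdFL : M * (Cd * FL) = (1 - A * Ad) * FL := by
    calc M * (Cd * FL) = (1 - A * Ad) * C * (Cd * FL) := by rw [← hM]
    _ = (1 - A * Ad) * (C * (Cd * FL)) := by rw [Matrix.mul_assoc]
    _ = (1 - A * Ad) * FL := by rw [f6]
  have hCYN : C * Y * (D * (1 - Bd * B)) = FL := by
    have hterm1 : C * (Md * F * Dd) * (D * (1 - Bd * B)) = C * (Md * FL) := by
      calc C * (Md * F * Dd) * (D * (1 - Bd * B))
          = C * (Md * F * (Dd * D) * (1 - Bd * B)) := by simp only [Matrix.mul_assoc]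
      _ = C * (Md * F * (1 - Bd * B)) := by rw [f8]
      _ = C * (Md * FL) := by rw [hFL, Matrix.mul_assoc]
    have hterm2 : C * ((1 - Md * M) * (Cd * FL * Nd)) * (D * (1 - Bd * B))
        = FL - C * (Md * FL) := by
      calc C * ((1 - Md * M) * (Cd * FL * Nd)) * (D * (1 - Bd * B))
          = C * ((1 - Md * M) * (Cd * (FL * Nd * N))) := by
            rw [← hN]; simp only [Matrix.mul_assoc]
      _ = C * ((1 - Md * M) * (Cd * (FL * (Nd * N)))) := by simp only [Matrix.mul_assoc]
      _ = C * ((1 - Md * M) * (Cd * FL)) := by rw [f5]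
      _ = C * (Cd * FL) - C * (Md * M * (Cd * FL)) := by
            rw [Matrix.sub_mul, Matrix.one_mul, Matrix.mul_sub]
      _ = FL - C * (Md * (M * (Cd * FL))) := by rw [f6, Matrix.mul_assoc Md M]
      _ = FL - C * (Md * ((1 - A * Ad) * FL)) := by rw [hMCdFL]
      _ = FL - C * (Md * FL) := by rw [f7]
    calc C * Y * (D * (1 - Bd * B))
        = (C * (Md * F * Dd) + C * ((1 - Md * M) * (Cd * FL * Nd))) * (D * (1 - Bd * B)) := by
          rw [hY, Matrix.mul_add]
    _ = C * (Md * F * Dd) * (D * (1 - Bd * B))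
          + C * ((1 - Md * M) * (Cd * FL * Nd)) * (D * (1 - Bd * B)) := by
          rw [Matrix.add_mul]
    _ = C * (Md * FL) + (FL - C * (Md * FL)) := by rw [hterm1, hterm2]
    _ = FL := by abel
  have claimB : G * (1 - Bd * B) = 0 := by
    rw [hG, Matrix.sub_mul, Matrix.mul_assoc, hCYN, hFL, sub_self]
  -- assemble
  refine ⟨Ad * G * Bd, Y, ?_⟩
  have hAAG : A * Ad * G = G := by
    have h := claimA
    rw [Matrix.sub_mul, Matrix.one_mul, sub_eq_zero] at h
    exact h.symm
  have hGBB : G * (Bd * B) = G := by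
    have h := claimB
    rw [Matrix.mul_sub, Matrix.mul_one, sub_eq_zero] at h
    exact h.symm
  have hAXB : A * (Ad * G * Bd) * B = G := by
    calc A * (Ad * G * Bd) * B = A * Ad * G * (Bd * B) := by simp only [Matrix.mul_assoc]
    _ = G := by rw [hAAG, hGBB]
  rw [hAXB, hG]
  abel
set_option maxHeartbeats 1600000 in
/-- Solvability of
`A₁X₁B₁ + A₂X₂B₂ + A₂(C₃X₃D₃ + C₄WD₄)B₁ = E₁`. -/
theorem stmt_12 {m n g k l hh q s t p : ℕ}
    (A₁ : Matrix (Fin m) (Fin n) ℍ[ℝ]) (A₁d : Matrix (Fin n) (Fin m) ℍ[ℝ])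
    (A₂ : Matrix (Fin m) (Fin g) ℍ[ℝ]) (A₂d : Matrix (Fin g) (Fin m) ℍ[ℝ])
    (B₁ : Matrix (Fin k) (Fin l) ℍ[ℝ]) (B₁d : Matrix (Fin l) (Fin k) ℍ[ℝ])
    (B₂ : Matrix (Fin hh) (Fin l) ℍ[ℝ]) (B₂d : Matrix (Fin l) (Fin hh) ℍ[ℝ])
    (C₃ : Matrix (Fin g) (Fin q) ℍ[ℝ]) (C₄ : Matrix (Fin g) (Fin t) ℍ[ℝ])
    (D₃ : Matrix (Fin s) (Fin k) ℍ[ℝ]) (D₄ : Matrix (Fin p) (Fin k) ℍ[ℝ])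
    (E₁ : Matrix (Fin m) (Fin l) ℍ[ℝ])
    (M₁ : Matrix (Fin m) (Fin g) ℍ[ℝ]) (M₁d : Matrix (Fin g) (Fin m) ℍ[ℝ])
    (N₁ : Matrix (Fin hh) (Fin l) ℍ[ℝ]) (N₁d : Matrix (Fin l) (Fin hh) ℍ[ℝ])
    (hM₁ : M₁ = (1 - A₁ * A₁d) * A₂) (hN₁ : N₁ = B₂ * (1 - B₁d * B₁))
    (hA₁1 : A₁ * A₁d * A₁ = A₁) (hA₁2 : A₁d * A₁ * A₁d = A₁d)
    (hA₁3 : (A₁ * A₁d)ᴴ = A₁ * A₁d) (hA₁4 : (A₁d * A₁)ᴴ = A₁d * A₁)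
    (hA₂1 : A₂ * A₂d * A₂ = A₂) (hA₂2 : A₂d * A₂ * A₂d = A₂d)
    (hA₂3 : (A₂ * A₂d)ᴴ = A₂ * A₂d) (hA₂4 : (A₂d * A₂)ᴴ = A₂d * A₂)
    (hB₁1 : B₁ * B₁d * B₁ = B₁) (hB₁2 : B₁d * B₁ * B₁d = B₁d)
    (hB₁3 : (B₁ * B₁d)ᴴ = B₁ * B₁d) (hB₁4 : (B₁d * B₁)ᴴ = B₁d * B₁)
    (hB₂1 : B₂ * B₂d * B₂ = B₂) (hB₂2 : B₂d * B₂ * B₂d = B₂d)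
    (hB₂3 : (B₂ * B₂d)ᴴ = B₂ * B₂d) (hB₂4 : (B₂d * B₂)ᴴ = B₂d * B₂)
    (hM₁1 : M₁ * M₁d * M₁ = M₁) (hM₁2 : M₁d * M₁ * M₁d = M₁d)
    (hM₁3 : (M₁ * M₁d)ᴴ = M₁ * M₁d) (hM₁4 : (M₁d * M₁)ᴴ = M₁d * M₁)
    (hN₁1 : N₁ * N₁d * N₁ = N₁) (hN₁2 : N₁d * N₁ * N₁d = N₁d)
    (hN₁3 : (N₁ * N₁d)ᴴ = N₁ * N₁d) (hN₁4 : (N₁d * N₁)ᴴ = N₁d * N₁) :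
    (∃ (X₁ : Matrix (Fin n) (Fin k) ℍ[ℝ]) (X₂ : Matrix (Fin g) (Fin hh) ℍ[ℝ])
        (X₃ : Matrix (Fin q) (Fin s) ℍ[ℝ]) (W : Matrix (Fin t) (Fin p) ℍ[ℝ]),
        A₁ * X₁ * B₁ + A₂ * X₂ * B₂
          + A₂ * (C₃ * X₃ * D₃ + C₄ * W * D₄) * B₁ = E₁) ↔
      ((1 - M₁ * M₁d) * ((1 - A₁ * A₁d) * E₁) = 0 ∧
       E₁ * (1 - B₁d * B₁) * (1 - N₁d * N₁) = 0 ∧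
       (1 - A₂ * A₂d) * E₁ * (1 - B₁d * B₁) = 0 ∧
       ∃ (X₃ : Matrix (Fin q) (Fin s) ℍ[ℝ]) (W : Matrix (Fin t) (Fin p) ℍ[ℝ]),
         (M₁ * C₃) * X₃ * (D₃ * B₁ * (1 - B₂d * B₂))
           + (M₁ * C₄) * W * (D₄ * B₁ * (1 - B₂d * B₂))
           = (1 - A₁ * A₁d) * E₁ * (1 - B₂d * B₂)) := by
  have hz1 : (1 - A₁ * A₁d) * A₁ = 0 := by
    rw [Matrix.sub_mul, Matrix.one_mul, hA₁1, sub_self]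
  have hz2 : B₁ * (1 - B₁d * B₁) = 0 := by
    rw [Matrix.mul_sub, Matrix.mul_one, ← Matrix.mul_assoc, hB₁1, sub_self]
  have hz3 : (1 - M₁ * M₁d) * M₁ = 0 := by
    rw [Matrix.sub_mul, Matrix.one_mul, hM₁1, sub_self]
  have hz4 : N₁ * (1 - N₁d * N₁) = 0 := by
    rw [Matrix.mul_sub, Matrix.mul_one, ← Matrix.mul_assoc, hN₁1, sub_self]
  have hz5 : (1 - A₂ * A₂d) * A₂ = 0 := by
    rw [Matrix.sub_mul, Matrix.one_mul, hA₂1, sub_self]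
  have hz6 : B₂ * (1 - B₂d * B₂) = 0 := by
    rw [Matrix.mul_sub, Matrix.mul_one, ← Matrix.mul_assoc, hB₂1, sub_self]
  have v1 : ∀ {z : ℕ} (T : Matrix (Fin n) (Fin z) ℍ[ℝ]),
      (1 - A₁ * A₁d) * (A₁ * T) = 0 := by
    intro z T; rw [← Matrix.mul_assoc, hz1, Matrix.zero_mul]
  have v2 : ∀ {z : ℕ} (T : Matrix (Fin g) (Fin z) ℍ[ℝ]),
      (1 - A₁ * A₁d) * (A₂ * T) = M₁ * T := by
    intro z T; rw [← Matrix.mul_assoc, ← hM₁]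
  have v3 : ∀ {z : ℕ} (T : Matrix (Fin g) (Fin z) ℍ[ℝ]),
      (1 - M₁ * M₁d) * (M₁ * T) = 0 := by
    intro z T; rw [← Matrix.mul_assoc, hz3, Matrix.zero_mul]
  have v5 : ∀ {z : ℕ} (T : Matrix (Fin g) (Fin z) ℍ[ℝ]),
      (1 - A₂ * A₂d) * (A₂ * T) = 0 := by
    intro z T; rw [← Matrix.mul_assoc, hz5, Matrix.zero_mul]
  have w1 : B₁ * ((1 - B₁d * B₁) * (1 - N₁d * N₁)) = 0 := by
    rw [← Matrix.mul_assoc, hz2, Matrix.zero_mul]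
  have w2 : B₂ * ((1 - B₁d * B₁) * (1 - N₁d * N₁)) = 0 := by
    rw [← Matrix.mul_assoc, ← hN₁, hz4]
  constructor
  · rintro ⟨X₁, X₂, X₃, W, hE⟩
    subst hE
    refine ⟨?_, ?_, ?_, X₃, W, ?_⟩
    · simp only [Matrix.mul_add, Matrix.add_mul, Matrix.mul_assoc, v1, v2, v3,
        Matrix.mul_zero, Matrix.zero_mul, add_zero, zero_add]
    · simp only [Matrix.mul_add, Matrix.add_mul, Matrix.mul_assoc, w1, w2, hz2, hz4, hz6,
        Matrix.mul_zero, Matrix.zero_mul, add_zero, zero_add]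
    · simp only [Matrix.mul_add, Matrix.add_mul, Matrix.mul_assoc, v5, hz2,
        Matrix.mul_zero, Matrix.zero_mul, add_zero, zero_add]
    · simp only [Matrix.mul_add, Matrix.add_mul, Matrix.mul_assoc, v1, v2, v3, hz6,
        Matrix.mul_zero, Matrix.zero_mul, add_zero, zero_add]
  · rintro ⟨c1, c2, c3, X₃, W, hhat⟩
    have hexp : M₁ * (C₃ * X₃ * D₃ + C₄ * W * D₄) * B₁ * (1 - B₂d * B₂)
        = (M₁ * C₃) * X₃ * (D₃ * B₁ * (1 - B₂d * B₂))
          + (M₁ * C₄) * W * (D₄ * B₁ * (1 - B₂d * B₂)) := by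
      rw [Matrix.mul_add, Matrix.add_mul, Matrix.add_mul]
      simp only [Matrix.mul_assoc]
    have w1' : ∀ (U : Matrix (Fin m) (Fin k) ℍ[ℝ]),
        U * B₁ * (1 - B₁d * B₁) * (1 - N₁d * N₁) = 0 := by
      intro U
      rw [Matrix.mul_assoc U B₁, hz2, Matrix.mul_zero, Matrix.zero_mul]
    obtain ⟨Z, hZ⟩ : ∃ Z, Z = C₃ * X₃ * D₃ + C₄ * W * D₄ := ⟨_, rfl⟩
    obtain ⟨F, hF⟩ : ∃ F, F = E₁ - A₂ * Z * B₁ := ⟨_, rfl⟩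
    have ha : (1 - M₁ * M₁d) * ((1 - A₁ * A₁d) * F) = 0 := by
      rw [hF, Matrix.mul_sub, Matrix.mul_sub, c1, Matrix.mul_assoc A₂ Z B₁, v2, v3,
        zero_sub, neg_zero]
    have hb : F * (1 - B₁d * B₁) * (1 - N₁d * N₁) = 0 := by
      rw [hF, Matrix.sub_mul, Matrix.sub_mul, c2, w1' (A₂ * Z), sub_zero]
    have hc : (1 - A₂ * A₂d) * F * (1 - B₁d * B₁) = 0 := by
      rw [hF, Matrix.mul_sub (1 - A₂ * A₂d) E₁ (A₂ * Z * B₁),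
        Matrix.sub_mul _ _ (1 - B₁d * B₁), c3, Matrix.mul_assoc A₂ Z B₁, v5,
        Matrix.zero_mul, zero_sub, neg_zero]
    have hd : (1 - A₁ * A₁d) * F * (1 - B₂d * B₂) = 0 := by
      rw [hF, Matrix.mul_sub (1 - A₁ * A₁d) E₁ (A₂ * Z * B₁),
        Matrix.sub_mul _ _ (1 - B₂d * B₂), Matrix.mul_assoc A₂ Z B₁, v2, hZ,
        ← Matrix.mul_assoc M₁ (C₃ * X₃ * D₃ + C₄ * W * D₄) B₁, hexp, hhat, sub_self]
    obtain ⟨X, Y, hXY⟩ := bk A₁ A₁d B₁ B₁d A₂ A₂d B₂ B₂d M₁ M₁d N₁ N₁d F hM₁ hN₁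
      hA₁1 hA₁3 hM₁1 hM₁2 hM₁3 ha hb hc hd
    refine ⟨X, Y, X₃, W, ?_⟩
    rw [hF] at hXY
    rw [← hZ, hXY]
    abel
end

section
/- Let η ∈ {i,j,k}. If W₁ is an n×n quaternion matrix satisfying A₃ W₁ = E₃ and W₁ A₃^{η*} = E₃^{η*}, then W := (W₁ + W₁^{η*})/2 is η-Hermitian and satisfies A₃ W = E₃. -/
open scoped Quaternion Matrix

/-- The η-conjugate transpose `M^{η*} = -η M* η` of a quaternion matrix. -/
noncomputable def etaStar {a b : ℕ} (η : ℍ[ℝ]) (M : Matrix (Fin a) (Fin b) ℍ[ℝ]) :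
    Matrix (Fin b) (Fin a) ℍ[ℝ] :=
  -(Matrix.scalar (Fin b) η * Mᴴ * Matrix.scalar (Fin a) η)

/-! For a unit quaternion `η` with `η² = -1` the map `M ↦ M^{η*}` is an involutive
anti-automorphism of quaternion matrices. Applied to `W₁ A₃^{η*} = E₃^{η*}` it gives
`A₃ W₁^{η*} = E₃`, so `A₃` sends the average of `W₁` and `W₁^{η*}` to `E₃`; the average is
η-Hermitian because the involution swaps its two summands. -/

instance : StarModule ℝ ℍ[ℝ] := ⟨fun r q => by rw [Quaternion.star_smul, star_trivial r]⟩

theorem Matrix.conjTranspose_scalar {n α : Type*} [Fintype n] [DecidableEq n] [Semiring α]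
    [StarRing α] (a : α) : (Matrix.scalar n a)ᴴ = Matrix.scalar n (star a) := by
  simp only [Matrix.scalar_apply, Matrix.diagonal_conjTranspose, Pi.star_def]

theorem Quaternion.mul_self_eq_neg_one {R : Type*} [CommRing R] [LinearOrder R]
    [IsStrictOrderedRing R] {η : ℍ[R]} (hre : η.re = 0) (hnorm : Quaternion.normSq η = 1) :
    η * η = -1 := by
  rw [← sq, Quaternion.sq_eq_neg_normSq.2 hre, hnorm, Quaternion.coe_one]

section EtaStar

variable {a b c : ℕ} {η : ℍ[ℝ]}

theorem etaStar_add (A B : Matrix (Fin a) (Fin b) ℍ[ℝ]) :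
    etaStar η (A + B) = etaStar η A + etaStar η B := by
  simp only [etaStar, Matrix.conjTranspose_add, Matrix.mul_add, Matrix.add_mul, neg_add]

theorem etaStar_smul (r : ℝ) (A : Matrix (Fin a) (Fin b) ℍ[ℝ]) :
    etaStar η (r • A) = r • etaStar η A := by
  simp only [etaStar, Matrix.conjTranspose_smul, star_trivial, Matrix.mul_smul, Matrix.smul_mul,
    smul_neg]

theorem etaStar_mul (hη : η * η = -1) (A : Matrix (Fin a) (Fin b) ℍ[ℝ])
    (B : Matrix (Fin b) (Fin c) ℍ[ℝ]) :
    etaStar η (A * B) = etaStar η B * etaStar η A := by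
  have hsq : Matrix.scalar (Fin b) η * Matrix.scalar (Fin b) η = -1 := by
    rw [← map_mul, hη, map_neg, map_one]
  simp only [etaStar, Matrix.conjTranspose_mul, Matrix.neg_mul, Matrix.mul_neg, neg_neg,
    Matrix.mul_assoc]
  rw [← Matrix.mul_assoc (Matrix.scalar (Fin b) η), hsq]
  simp

theorem etaStar_etaStar (hη : Quaternion.normSq η = 1) (A : Matrix (Fin a) (Fin b) ℍ[ℝ]) :
    etaStar η (etaStar η A) = A := by
  have hleft : Matrix.scalar (Fin a) η * Matrix.scalar (Fin a) (star η) = 1 := by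
    rw [← map_mul, Quaternion.self_mul_star, hη, Quaternion.coe_one, map_one]
  have hright : Matrix.scalar (Fin b) (star η) * Matrix.scalar (Fin b) η = 1 := by
    rw [← map_mul, Quaternion.star_mul_self, hη, Quaternion.coe_one, map_one]
  simp only [etaStar, Matrix.conjTranspose_neg, Matrix.conjTranspose_mul,
    Matrix.conjTranspose_conjTranspose, Matrix.conjTranspose_scalar, Matrix.mul_neg,
    Matrix.neg_mul, neg_neg, Matrix.mul_assoc]
  rw [← Matrix.mul_assoc (Matrix.scalar (Fin a) η), hleft, hright, Matrix.one_mul,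
    Matrix.mul_one]

theorem etaStar_add_etaStar_self (hη : Quaternion.normSq η = 1)
    (W : Matrix (Fin a) (Fin a) ℍ[ℝ]) :
    etaStar η (W + etaStar η W) = W + etaStar η W := by
  rw [etaStar_add, etaStar_etaStar hη, add_comm]

end EtaStar

/-- If `A₃ W₁ = E₃` and `W₁ A₃^{η*} = E₃^{η*}`, then `W = (W₁ + W₁^{η*})/2` is
η-Hermitian and satisfies `A₃ W = E₃`. -/
theorem stmt_14 {m n : ℕ} (η : ℍ[ℝ])
    (hη : η = ⟨0, 1, 0, 0⟩ ∨ η = ⟨0, 0, 1, 0⟩ ∨ η = ⟨0, 0, 0, 1⟩)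
    (A₃ : Matrix (Fin m) (Fin n) ℍ[ℝ]) (E₃ : Matrix (Fin m) (Fin n) ℍ[ℝ])
    (W₁ : Matrix (Fin n) (Fin n) ℍ[ℝ])
    (h1 : A₃ * W₁ = E₃) (h2 : W₁ * etaStar η A₃ = etaStar η E₃) :
    etaStar η ((1 / 2 : ℝ) • (W₁ + etaStar η W₁))
        = (1 / 2 : ℝ) • (W₁ + etaStar η W₁) ∧
      A₃ * ((1 / 2 : ℝ) • (W₁ + etaStar η W₁)) = E₃ := by
  obtain ⟨hre, hnorm⟩ : η.re = 0 ∧ Quaternion.normSq η = 1 := by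
    rw [Quaternion.normSq_def']
    rcases hη with h | h | h <;> rw [h] <;> norm_num
  have hW₁η : A₃ * etaStar η W₁ = E₃ := by
    have := congrArg (etaStar η) h2
    rwa [etaStar_mul (Quaternion.mul_self_eq_neg_one hre hnorm), etaStar_etaStar hnorm,
      etaStar_etaStar hnorm] at this
  refine ⟨by rw [etaStar_smul, etaStar_add_etaStar_self hnorm], ?_⟩
  rw [Matrix.mul_smul, Matrix.mul_add, h1, hW₁η, ← two_smul ℝ E₃, smul_smul]
  norm_num
end

section
/- The quaternion matrix equation A X = E together with X B = F has a common solution if and only if each is individually solvable and A F = E B, i.e. R_A E = 0, F L_B = 0, and A F = E B. -/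
open scoped Quaternion Matrix

/-- `A X = E`, `X B = F` has a common solution iff `R_A E = 0`, `F L_B = 0`
and `A F = E B`. -/
theorem stmt_16 {m n p q : ℕ} (A : Matrix (Fin m) (Fin n) ℍ[ℝ])
    (Ad : Matrix (Fin n) (Fin m) ℍ[ℝ]) (B : Matrix (Fin p) (Fin q) ℍ[ℝ])
    (Bd : Matrix (Fin q) (Fin p) ℍ[ℝ])
    (E : Matrix (Fin m) (Fin p) ℍ[ℝ]) (F : Matrix (Fin n) (Fin q) ℍ[ℝ])
    (hA1 : A * Ad * A = A) (hA2 : Ad * A * Ad = Ad)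
    (hA3 : (A * Ad)ᴴ = A * Ad) (hA4 : (Ad * A)ᴴ = Ad * A)
    (hB1 : B * Bd * B = B) (hB2 : Bd * B * Bd = Bd)
    (hB3 : (B * Bd)ᴴ = B * Bd) (hB4 : (Bd * B)ᴴ = Bd * B) :
    (∃ X : Matrix (Fin n) (Fin p) ℍ[ℝ], A * X = E ∧ X * B = F) ↔
      ((1 - A * Ad) * E = 0 ∧ F * (1 - Bd * B) = 0 ∧ A * F = E * B) := by
  constructor
  · rintro ⟨X, hE, hF⟩
    refine ⟨?_, ?_, ?_⟩
    · have h : A * Ad * E = E := by rw [← hE, ← Matrix.mul_assoc, hA1]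
      rw [Matrix.sub_mul, Matrix.one_mul, h, sub_self]
    · have h : F * (Bd * B) = F := by
        rw [← hF, Matrix.mul_assoc, ← Matrix.mul_assoc B, hB1]
      rw [Matrix.mul_sub, Matrix.mul_one, h, sub_self]
    · rw [← hE, ← hF, Matrix.mul_assoc]
  · rintro ⟨h1, h2, h3⟩
    have hE : A * (Ad * E) = E := by
      rw [Matrix.sub_mul, Matrix.one_mul, sub_eq_zero] at h1
      rw [Matrix.mul_assoc] at h1
      exact h1.symm
    have hF : F * Bd * B = F := by
      rw [Matrix.mul_sub, Matrix.mul_one, sub_eq_zero] at h2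
      rw [Matrix.mul_assoc]
      exact h2.symm
    refine ⟨Ad * E + F * Bd - Ad * A * F * Bd, ?_, ?_⟩
    · have k1 : A * (Ad * A * F * Bd) = A * F * Bd := by
        calc A * (Ad * A * F * Bd) = (A * Ad * A) * F * Bd := by
              simp only [Matrix.mul_assoc]
          _ = A * F * Bd := by rw [hA1]
      rw [Matrix.mul_sub, Matrix.mul_add, hE, k1, ← Matrix.mul_assoc]
      abel
    · have k2 : Ad * A * F * Bd * B = Ad * A * F := by
        rw [Matrix.mul_assoc, Matrix.mul_assoc (Ad * A) F, ← Matrix.mul_assoc F, hF]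
      have k3 : Ad * E * B = Ad * A * F := by
        rw [Matrix.mul_assoc, ← h3, ← Matrix.mul_assoc]
      rw [Matrix.sub_mul, Matrix.add_mul, hF, k2, k3]
      abel
end
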